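/- Let P be a convex polygon in R² that is the convex hull of finitely many vertices v₁,...,v_m, and consider two homothets H̄ = ᾱP + β̄ and H̲ = α̲P + β̲ with ᾱ ≥ α̲ > 0. Then the Hausdorff-type maximal distance sup_{x ∈ H̄} dist(x, H̲) is attained at a vertex of H̄ and equals max_i ‖(ᾱ − α̲)v_i + β̄ − β̲‖₂ whenever H̲ ⊆ H̄. -/

import Mathlib

open Pointwise

/-!
Write `t = ᾱ - α̲ ≥ 0` and `c = β̄ - β̲`. The point `ᾱy + β̄` of the outer homothet lies at distance
`‖t y + c‖` from the point `α̲y + β̲` of the inner one, and this convex function of `y ∈ P` is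
maximised at a vertex `vᵢ`. Conversely, with `u = t vᵢ + c`, the inner homothet lies in the
half-plane `⟪· - (α̲vᵢ + β̲), u⟫ ≤ 0` as soon as `vᵢ` maximises `⟪·, u⟫` on `P`, so the vertex
`ᾱvᵢ + β̄ = α̲vᵢ + β̲ + u` is at distance at least `‖u‖` from it. For `t > 0` the norm-maximising
vertex has this property by Cauchy–Schwarz; for `t = 0` every vertex maximises the norm, and we
take one maximising `⟪·, c⟫`.
-/

open Set Metric RealInnerProductSpace

lemma Real.biSup_eq_of_forall_le_of_mem {α : Type*} {S : Set α} {f : α → ℝ} {x₀ : α}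
    (hx₀ : x₀ ∈ S) (hf : ∀ x ∈ S, f x ≤ f x₀) (h₀ : 0 ≤ f x₀) : ⨆ x ∈ S, f x = f x₀ := by
  have hle : ∀ x, ⨆ _ : x ∈ S, f x ≤ f x₀ := fun x => Real.iSup_le (hf x) h₀
  refine le_antisymm (Real.iSup_le hle h₀) ?_
  calc f x₀ = ⨆ _ : x₀ ∈ S, f x₀ := (ciSup_pos (f := fun _ => f x₀) hx₀).symm
    _ ≤ ⨆ x ∈ S, f x := le_ciSup ⟨f x₀, forall_mem_range.2 hle⟩ x₀

section

variable {E : Type*} [NormedAddCommGroup E] [InnerProductSpace ℝ E]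

lemma smul_add_singleton_eq_image (a : ℝ) (s : Set E) (b : E) :
    a • s + {b} = (fun y => a • y + b) '' s := by
  rw [add_singleton, ← image_smul, image_image]

lemma smul_add_mem_smul_add_singleton {a : ℝ} {s : Set E} {y : E} (hy : y ∈ s) (b : E) :
    a • y + b ∈ a • s + {b} :=
  add_mem_add (smul_mem_smul_set hy) rfl

lemma convexOn_norm_smul_add (t : ℝ) (c : E) : ConvexOn ℝ univ fun y : E => ‖t • y + c‖ :=
  convexOn_univ_norm.comp_affineMap (t • AffineMap.id ℝ E + AffineMap.const ℝ E c)

lemma convexOn_inner_left (u : E) : ConvexOn ℝ univ fun y : E => ⟪y, u⟫ := by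
  simpa [real_inner_comm] using (innerₛₗ ℝ u).convexOn convex_univ

lemma ConvexOn.le_of_mem_convexHull_range {ι : Type*} {f : E → ℝ} (hf : ConvexOn ℝ univ f)
    {v : ι → E} {r : ℝ} (hv : ∀ j, f (v j) ≤ r) {y : E} (hy : y ∈ convexHull ℝ (range v)) :
    f y ≤ r := by
  obtain ⟨_, ⟨j, rfl⟩, hj⟩ := hf.exists_ge_of_mem_convexHull (subset_univ _) hy
  exact hj.trans (hv j)

lemma inner_le_inner_of_norm_smul_add_le {t : ℝ} (ht : 0 < t) {p q c : E}
    (h : ‖t • p + c‖ ≤ ‖t • q + c‖) : ⟪p, t • q + c⟫ ≤ ⟪q, t • q + c⟫ := by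
  set u := t • q + c
  have key : ⟪t • p + c, u⟫ ≤ ⟪u, u⟫ := calc
    ⟪t • p + c, u⟫ ≤ ‖t • p + c‖ * ‖u‖ := real_inner_le_norm _ _
    _ ≤ ‖u‖ * ‖u‖ := by gcongr
    _ = ⟪u, u⟫ := (real_inner_self_eq_norm_mul_norm u).symm
  have hu : ⟪u, u⟫ = t * ⟪q, u⟫ + ⟪c, u⟫ := by rw [inner_add_left, real_inner_smul_left]
  rw [hu, inner_add_left, real_inner_smul_left] at key
  exact le_of_mul_le_mul_left (by linarith) ht

lemma exists_forall_norm_smul_add_le_and_inner_le {ι : Type*} [Finite ι] [Nonempty ι] {t : ℝ}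
    (ht : 0 ≤ t) (v : ι → E) (c : E) :
    ∃ i, (∀ j, ‖t • v j + c‖ ≤ ‖t • v i + c‖) ∧ ∀ j, ⟪v j, t • v i + c⟫ ≤ ⟪v i, t • v i + c⟫ := by
  rcases ht.eq_or_lt with rfl | ht
  · obtain ⟨i, hi⟩ := Finite.exists_max fun j => ⟪v j, c⟫
    exact ⟨i, by simp, by simpa using hi⟩
  · obtain ⟨i, hi⟩ := Finite.exists_max fun j => ‖t • v j + c‖
    exact ⟨i, hi, fun j => inner_le_inner_of_norm_smul_add_le ht (hi j)⟩

lemma norm_le_infDist_add_of_forall_inner_le {S : Set E} (hS : S.Nonempty) {q u : E}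
    (h : ∀ z ∈ S, ⟪z, u⟫ ≤ ⟪q, u⟫) : ‖u‖ ≤ infDist (q + u) S := by
  refine (le_infDist hS).2 fun z hz => ?_
  rcases eq_or_ne u 0 with rfl | hu
  · simp
  refine le_of_mul_le_mul_right ?_ (norm_pos_iff.2 hu)
  calc ‖u‖ * ‖u‖ = ⟪u, u⟫ := (real_inner_self_eq_norm_mul_norm u).symm
    _ ≤ ⟪q + u - z, u⟫ := by
      rw [add_sub_right_comm, inner_add_left, inner_sub_left]; linarith [h z hz]
    _ ≤ ‖q + u - z‖ * ‖u‖ := real_inner_le_norm _ _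
    _ = dist (q + u) z * ‖u‖ := by rw [dist_eq_norm]

lemma infDist_smul_add_le {s : Set E} {y : E} (hy : y ∈ s) (aOut aIn : ℝ) (bOut bIn : E) :
    infDist (aOut • y + bOut) (aIn • s + {bIn}) ≤ ‖(aOut - aIn) • y + (bOut - bIn)‖ :=
  calc infDist (aOut • y + bOut) (aIn • s + {bIn})
      ≤ dist (aOut • y + bOut) (aIn • y + bIn) :=
        infDist_le_dist_of_mem (smul_add_mem_smul_add_singleton hy bIn)
    _ = ‖(aOut - aIn) • y + (bOut - bIn)‖ := by rw [dist_eq_norm, sub_smul]; abel_nf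

lemma infDist_smul_add_eq_of_forall_inner_le {s : Set E} {p : E} (hp : p ∈ s) {aOut aIn : ℝ}
    (haIn : 0 ≤ aIn) (bOut bIn : E)
    (h : ∀ y ∈ s, ⟪y, (aOut - aIn) • p + (bOut - bIn)⟫ ≤ ⟪p, (aOut - aIn) • p + (bOut - bIn)⟫) :
    infDist (aOut • p + bOut) (aIn • s + {bIn}) = ‖(aOut - aIn) • p + (bOut - bIn)‖ := by
  set u := (aOut - aIn) • p + (bOut - bIn)
  refine le_antisymm (infDist_smul_add_le hp aOut aIn bOut bIn) ?_
  have hsplit : aOut • p + bOut = aIn • p + bIn + u := by simp only [u, sub_smul]; abel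
  rw [hsplit, smul_add_singleton_eq_image]
  refine norm_le_infDist_add_of_forall_inner_le ⟨_, mem_image_of_mem _ hp⟩ ?_
  rintro _ ⟨y, hy, rfl⟩
  simp only [inner_add_left, real_inner_smul_left]
  linarith [mul_le_mul_of_nonneg_left (h y hy) haIn]

end

theorem distance_metric_homothets_general {m : ℕ} (hm : 0 < m)
    (v : Fin m → EuclideanSpace ℝ (Fin 2))
    (aOut aIn : ℝ) (bOut bIn : EuclideanSpace ℝ (Fin 2))
    (hIn : 0 < aIn) (hle : aIn ≤ aOut) :
    (⨆ x ∈ aOut • convexHull ℝ (Set.range v) + {bOut},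
        Metric.infDist x (aIn • convexHull ℝ (Set.range v) + {bIn}))
      = (⨆ i, ‖(aOut - aIn) • v i + (bOut - bIn)‖) ∧
    (∃ i : Fin m,
      Metric.infDist (aOut • v i + bOut) (aIn • convexHull ℝ (Set.range v) + {bIn})
        = ⨆ x ∈ aOut • convexHull ℝ (Set.range v) + {bOut},
            Metric.infDist x (aIn • convexHull ℝ (Set.range v) + {bIn})) := by
  have : Nonempty (Fin m) := ⟨⟨0, hm⟩⟩
  set K := convexHull ℝ (range v)
  obtain ⟨i, hnorm, hinner⟩ :=
    exists_forall_norm_smul_add_le_and_inner_le (sub_nonneg.2 hle) v (bOut - bIn)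
  have hvi : v i ∈ K := subset_convexHull ℝ _ (mem_range_self i)
  have hvertex := infDist_smul_add_eq_of_forall_inner_le hvi hIn.le bOut bIn
    fun y hy => (convexOn_inner_left _).le_of_mem_convexHull_range hinner hy
  have hbound : ∀ x ∈ aOut • K + {bOut}, infDist x (aIn • K + {bIn}) ≤
      infDist (aOut • v i + bOut) (aIn • K + {bIn}) := by
    rw [hvertex, smul_add_singleton_eq_image]
    rintro _ ⟨y, hy, rfl⟩
    exact (infDist_smul_add_le hy aOut aIn bOut bIn).trans
      ((convexOn_norm_smul_add _ _).le_of_mem_convexHull_range hnorm hy)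
  have hsup := Real.biSup_eq_of_forall_le_of_mem
    (smul_add_mem_smul_add_singleton hvi bOut) hbound infDist_nonneg
  have hmax : ⨆ j, ‖(aOut - aIn) • v j + (bOut - bIn)‖ = ‖(aOut - aIn) • v i + (bOut - bIn)‖ :=
    ciSup_eq_of_forall_le_of_forall_lt_exists_gt hnorm fun _ hw => ⟨i, hw⟩
  exact ⟨hsup.trans (hvertex.trans hmax.symm), i, hsup.symm⟩

/-- For nested homothets of a convex polygon P = conv{v₁,…,vₘ}, the maximal distance
from a point of the outer homothet to the inner homothet equals
max_i ‖(ᾱ − α̲)vᵢ + β̄ − β̲‖, and it is attained at a vertex of the outer homothet. -/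
theorem distance_metric_homothets {m : ℕ} (hm : 0 < m)
    (v : Fin m → EuclideanSpace ℝ (Fin 2))
    (aOut aIn : ℝ) (bOut bIn : EuclideanSpace ℝ (Fin 2))
    (hIn : 0 < aIn) (hle : aIn ≤ aOut)
    (hsub : aIn • convexHull ℝ (Set.range v) + {bIn}
      ⊆ aOut • convexHull ℝ (Set.range v) + {bOut}) :
    (⨆ x ∈ aOut • convexHull ℝ (Set.range v) + {bOut},
        Metric.infDist x (aIn • convexHull ℝ (Set.range v) + {bIn}))
      = (⨆ i, ‖(aOut - aIn) • v i + (bOut - bIn)‖) ∧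
    (∃ i : Fin m,
      Metric.infDist (aOut • v i + bOut) (aIn • convexHull ℝ (Set.range v) + {bIn})
        = ⨆ x ∈ aOut • convexHull ℝ (Set.range v) + {bOut},
            Metric.infDist x (aIn • convexHull ℝ (Set.range v) + {bIn})) :=
  distance_metric_homothets_general hm v aOut aIn bOut bIn hIn hle
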